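/- Let s₁, …, s_m be linearly independent vectors in a real vector space of symmetric bilinear forms on a finite-dimensional real vector space E, and suppose s₁ is positive-definite. Then there exist linearly independent positive-definite symmetric bilinear forms b₁, …, b_m with span(b₁,…,b_m) = span(s₁,…,s_m). -/

import Mathlib

/-!
Since `s 0` is positive-definite, for each `i` some `s i + c i • s 0` is positive-definite: in
any norm the ratio `s i v v / s 0 v v` is continuous on the compact unit sphere, hence bounded,
and both forms are homogeneous of degree two. Adding multiples of `s 0` to the other `s i` is a
unitriangular change of the family, so it keeps the span and, the family being finite, linear
independence.
-/

open Metric Submodule Set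

theorem span_range_add_smul {ι R M : Type*} [Ring R] [AddCommGroup M] [Module R M] (v : ι → M)
    (i₀ : ι) (c : ι → R) (hc : c i₀ = 0) :
    span R (range fun i ↦ v i + c i • v i₀) = span R (range v) := by
  set w := fun i ↦ v i + c i • v i₀
  have hw₀ : w i₀ = v i₀ := by simp [w, hc]
  apply le_antisymm <;> rw [span_le] <;> rintro _ ⟨i, rfl⟩
  · exact add_mem (subset_span ⟨i, rfl⟩) (smul_mem _ _ (subset_span ⟨i₀, rfl⟩))
  · have hv : v i = w i - c i • w i₀ := by simp [w, hw₀]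
    rw [hv]
    exact sub_mem (subset_span ⟨i, rfl⟩) (smul_mem _ _ (subset_span ⟨i₀, rfl⟩))

theorem LinearIndependent.of_span_range_eq {ι R M : Type*} [Semiring R] [Nontrivial R]
    [OrzechProperty R] [AddCommMonoid M] [Module R M] [Fintype ι] {v w : ι → M}
    (hv : LinearIndependent R v) (h : span R (range w) = span R (range v)) :
    LinearIndependent R w := by
  rw [linearIndependent_iff_card_eq_finrank_span] at hv ⊢
  rwa [Set.finrank, h]

section PositiveDefinite

variable {F : Type*} [NormedAddCommGroup F] [NormedSpace ℝ F]

theorem apply_self_pos_of_forall_mem_sphere (p : F →ₗ[ℝ] F →ₗ[ℝ] ℝ)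
    (h : ∀ u ∈ sphere (0 : F) 1, 0 < p u u) {v : F} (hv : v ≠ 0) : 0 < p v v := by
  have hnorm : 0 < ‖v‖ := norm_pos_iff.mpr hv
  have hu : ‖v‖⁻¹ • v ∈ sphere (0 : F) 1 := by
    simp [norm_smul, hnorm.ne']
  have hpv : p v v = ‖v‖ ^ 2 * p (‖v‖⁻¹ • v) (‖v‖⁻¹ • v) := by
    simp only [map_smul, LinearMap.smul_apply, smul_eq_mul]
    field_simp
  rw [hpv]
  exact mul_pos (by positivity) (h _ hu)

theorem exists_add_smul_apply_self_pos_of_normedSpace [FiniteDimensional ℝ F]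
    (s q : F →ₗ[ℝ] F →ₗ[ℝ] ℝ) (hq : ∀ v, v ≠ 0 → 0 < q v v) :
    ∃ c : ℝ, ∀ v, v ≠ 0 → 0 < (s + c • q) v v := by
  have hcont (p : F →ₗ[ℝ] F →ₗ[ℝ] ℝ) : Continuous fun v ↦ p v v :=
    p.toContinuousBilinearMap.continuous₂.comp (continuous_id.prodMk continuous_id)
  have hq_sphere (u : F) (hu : u ∈ sphere (0 : F) 1) : 0 < q u u :=
    hq u (ne_zero_of_mem_unit_sphere ⟨u, hu⟩)
  obtain ⟨C, hC⟩ := (isCompact_sphere (0 : F) 1).exists_bound_of_continuousOn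
    ((hcont s).continuousOn.div (hcont q).continuousOn fun u hu ↦ (hq_sphere u hu).ne')
  refine ⟨C + 1, fun v hv ↦ apply_self_pos_of_forall_mem_sphere _ (fun u hu ↦ ?_) hv⟩
  have hqu := hq_sphere u hu
  have hratio : -C ≤ s u u / q u u := neg_le_of_abs_le (by simpa [abs_div] using hC u hu)
  rw [le_div_iff₀ hqu] at hratio
  simp only [LinearMap.add_apply, LinearMap.smul_apply, smul_eq_mul]
  linarith

end PositiveDefinite

theorem exists_add_smul_apply_self_pos {E : Type*} [AddCommGroup E] [Module ℝ E]
    [FiniteDimensional ℝ E] (s q : E →ₗ[ℝ] E →ₗ[ℝ] ℝ) (hq : ∀ v, v ≠ 0 → 0 < q v v) :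
    ∃ c : ℝ, ∀ v, v ≠ 0 → 0 < (s + c • q) v v := by
  let e := (Module.finBasis ℝ E).equivFun
  obtain ⟨c, hc⟩ := exists_add_smul_apply_self_pos_of_normedSpace
    (s.compl₁₂ e.symm.toLinearMap e.symm.toLinearMap)
    (q.compl₁₂ e.symm.toLinearMap e.symm.toLinearMap)
    (fun x hx ↦ by simpa using hq (e.symm x) (by simpa using hx))
  exact ⟨c, fun v hv ↦ by simpa using hc (e v) (by simpa using hv)⟩

/-- If `s 0, …, s (m-1)` are linearly independent symmetric bilinear
forms on a finite-dimensional real vector space `E` and `s 0` is positive-definite,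
then there are linearly independent positive-definite symmetric bilinear forms
`b 0, …, b (m-1)` with the same span. -/
theorem stmt_2 {E : Type*} [AddCommGroup E] [Module ℝ E] [FiniteDimensional ℝ E]
    {m : ℕ} (hm : 0 < m)
    (s : Fin m → (E →ₗ[ℝ] E →ₗ[ℝ] ℝ))
    (hind : LinearIndependent ℝ s)
    (hsymm : ∀ i, ∀ v w : E, s i v w = s i w v)
    (hpos : ∀ v : E, v ≠ 0 → 0 < s ⟨0, hm⟩ v v) :
    ∃ b : Fin m → (E →ₗ[ℝ] E →ₗ[ℝ] ℝ),
      LinearIndependent ℝ b ∧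
      (∀ i, ∀ v w : E, b i v w = b i w v) ∧
      (∀ i, ∀ v : E, v ≠ 0 → 0 < b i v v) ∧
      Submodule.span ℝ (Set.range b) = Submodule.span ℝ (Set.range s) := by
  set i₀ : Fin m := ⟨0, hm⟩
  choose c hc using fun i ↦ exists_add_smul_apply_self_pos (s i) (s i₀) hpos
  set c' := Function.update c i₀ 0
  have hspan : span ℝ (range fun i ↦ s i + c' i • s i₀) = span ℝ (range s) :=
    span_range_add_smul s i₀ c' (by simp [c'])
  refine ⟨fun i ↦ s i + c' i • s i₀, hind.of_span_range_eq hspan, fun i v w ↦ ?_,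
    fun i v hv ↦ ?_, hspan⟩
  · simp only [LinearMap.add_apply, LinearMap.smul_apply, hsymm]
  by_cases hi : i = i₀
  · subst hi
    simpa [c'] using hpos v hv
  · simpa [c', hi] using hc i v hv
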